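/- In the same setting, with ε and ξ as defined, also ε ∘ ξ = id on Hom(M(X), M(Y)); hence ε is an isomorphism with inverse ξ. -/

import Mathlib

/-!  Ω is the category of nonempty finite sets ⟨s⟩ = {1,…,s} (encoded here as
`Fin (s+1)`, s : ℕ, so that every object is nonempty) with surjections as
morphisms.  An `OmegaFunctor R` is a functor Ωᵒᵖ → Mod R. -/

structure OmegaFunctor (R : Type) [CommRing R] where
  obj : ℕ → Type
  [acg : ∀ s, AddCommGroup (obj s)]
  [mod : ∀ s, Module R (obj s)]
  map : ∀ {s t : ℕ} (h : Fin (t + 1) → Fin (s + 1)),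
    Function.Surjective h → (obj s →ₗ[R] obj t)
  map_id : ∀ s : ℕ, map (s := s) id Function.surjective_id = LinearMap.id
  map_comp : ∀ {s t u : ℕ} (h : Fin (t + 1) → Fin (s + 1)) (hh : Function.Surjective h)
    (k : Fin (u + 1) → Fin (t + 1)) (hk : Function.Surjective k),
    map (h ∘ k) (hh.comp hk) = (map k hk).comp (map h hh)

attribute [instance] OmegaFunctor.acg OmegaFunctor.mod

/-- Natural transformations F → G, as a submodule of the product of the Hom modules. -/
def OmegaFunctor.Nat {R : Type} [CommRing R] (F G : OmegaFunctor R) :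
    Submodule R (∀ s : ℕ, F.obj s →ₗ[R] G.obj s) where
  carrier := {T | ∀ {s t : ℕ} (h : Fin (t + 1) → Fin (s + 1)) (hs : Function.Surjective h),
    (G.map h hs).comp (T s) = (T t).comp (F.map h hs)}
  add_mem' := by
    intro a b ha hb s t h hs
    simp only [Pi.add_apply, LinearMap.comp_add, LinearMap.add_comp, ha h hs, hb h hs]
  zero_mem' := by
    intro s t h hs
    simp
  smul_mem' := by
    intro c a ha s t h hs
    simp only [Pi.smul_apply, LinearMap.comp_smul, LinearMap.smul_comp, ha h hs]

/-- The smash-power functor `M(S)` of a pointed set `(S, pt)`: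
`M(S)(⟨s⟩)` is the free reduced `R`-module on the smash power `S^∧s`, whose basis is
the set of `s`-tuples of non-basepoint elements of `S`; a surjection `h : ⟨t⟩ → ⟨s⟩`
acts by precomposition on coordinates. -/
noncomputable def Mfun (R : Type) [CommRing R] (S : Type) (pt : S) : OmegaFunctor R where
  obj s := (Fin (s + 1) → {x : S // x ≠ pt}) →₀ R
  map h _ := Finsupp.lmapDomain R R (fun x => x ∘ h)
  map_id s := by
    exact Finsupp.lmapDomain_id R R
  map_comp h hh k hk := by
    exact Finsupp.lmapDomain_comp R R (fun x => x ∘ h) (fun x => x ∘ k)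

open scoped Classical
set_option linter.unusedSectionVars false

/-- Non-basepoint basepoint-preserving functions `(X,px) → (Y,py)`: the basis of
the free reduced `R`-module on the pointed set of pointed functions `X → Y`. -/
def PFunB (X Y : Type) (px : X) (py : Y) : Type :=
  {v : X → Y // v px = py ∧ ∃ x, v x ≠ py}

section Xi

variable (R : Type) [CommRing R] (X Y : Type) [Fintype X] [DecidableEq X]
  (px : X) (py : Y) [LinearOrder {x : X // x ≠ px}]

/-- For a nonempty `E ⊆ X ∖ {*}`, `|E| = |E| - 1 + 1`. -/
theorem card_eq (E : Finset {x : X // x ≠ px}) (hE : E.Nonempty) :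
    E.card = E.card - 1 + 1 :=
  (Nat.succ_pred_eq_of_pos (Finset.card_pos.mpr hE)).symm

/-- `κ_E = [x₁ ∧ ⋯ ∧ x_s] ∈ M(X)(⟨s⟩)` for `E = {x₁ < ⋯ < x_s} ⊆ X ∖ {*}`. -/
noncomputable def kappa (E : Finset {x : X // x ≠ px}) (hE : E.Nonempty) :
    (Mfun R X px).obj (E.card - 1) :=
  Finsupp.single (fun t => (E.orderIsoOfFin (card_eq X px E hE) t).1) 1

/-- The underlying function of `Φ_E^F [y₁ ∧ ⋯ ∧ y_s]`: it sends the `t`-th element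
of `E` to `y_t` when that element lies in `F`, and everything else to the
basepoint. -/
noncomputable def phiFun (E F : Finset {x : X // x ≠ px}) (hF : F.Nonempty)
    (hFE : F ⊆ E) (y : Fin (E.card - 1 + 1) → {y : Y // y ≠ py}) : X → Y :=
  fun x =>
    if h : ∃ hx : x ≠ px, (⟨x, hx⟩ : {x : X // x ≠ px}) ∈ F then
      (y ((E.orderIsoOfFin (card_eq X px E (hF.mono hFE))).symm
        ⟨⟨x, h.choose⟩, hFE h.choose_spec⟩)).1
    else py

theorem phiFun_pointed (E F : Finset {x : X // x ≠ px}) (hF : F.Nonempty)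
    (hFE : F ⊆ E) (y : Fin (E.card - 1 + 1) → {y : Y // y ≠ py}) :
    phiFun X Y px py E F hF hFE y px = py ∧
      ∃ x, phiFun X Y px py E F hF hFE y x ≠ py := by
  constructor
  · rw [phiFun, dif_neg]
    rintro ⟨hx, -⟩
    exact hx rfl
  · refine ⟨hF.choose.1, ?_⟩
    rw [phiFun, dif_pos ⟨hF.choose.2, by simpa using hF.choose_spec⟩]
    exact (y _).2

/-- `Φ_E^F`, extended linearly from the basis of `M(Y)(⟨|E|⟩)`. -/
noncomputable def Phi (E F : Finset {x : X // x ≠ px}) (hF : F.Nonempty)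
    (hFE : F ⊆ E) :
    (Mfun R Y py).obj (E.card - 1) →ₗ[R] (PFunB X Y px py →₀ R) :=
  Finsupp.lift _ R _
    (fun y => Finsupp.single
      (⟨phiFun X Y px py E F hF hFE y, phiFun_pointed X Y px py E F hF hFE y⟩ :
        PFunB X Y px py) 1)

/-- The Bendersky–Gitler-style map
`ξ(T) = Σ_{∅ ≠ F ⊆ E ⊆ X∖{*}} (−1)^{|E|−|F|} Φ_E^F(T_{⟨|E|⟩}(κ_E))`. -/
noncomputable def xi (T : ((Mfun R X px).Nat (Mfun R Y py))) :
    PFunB X Y px py →₀ R :=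
  ∑ E : Finset {x : X // x ≠ px}, ∑ F : Finset {x : X // x ≠ px},
    if h : F.Nonempty ∧ F ⊆ E then
      ((-1 : ℤ) ^ (E.card - F.card)) •
        (Phi R X Y px py E F h.1 h.2)
          (T.1 (E.card - 1) (kappa R X px E (h.1.mono h.2)))
    else 0

end Xi

/-! Evaluate `ε(ξ(T))` on a basis element `[x₁ ∧ ⋯ ∧ x_s]` of `M(X)(⟨s⟩)` and let `A` be the set
of the `x_t`. The `(E, F)` summand vanishes unless `A ⊆ F ⊆ E`, and is then `(−1)^{|E|−|F|}`
times the pullback of `T(κ_E)` along the positions of the `x_t` in `E`, which does not depend on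
`F`. Summing the signs over `F ∈ [A, E]` gives `δ_{A,E}`, so only `E = A` survives, and naturality
of `T` along the surjection sending `t` to the position of `x_t` in `A` turns the pullback of
`T(κ_A)` into `T([x₁ ∧ ⋯ ∧ x_s])`. -/

namespace Finset

theorem sum_Icc_neg_one_pow_card_sub {α : Type} [DecidableEq α] (A E : Finset α) :
    ∑ F ∈ Icc A E, (-1 : ℤ) ^ (E.card - F.card) = if A = E then 1 else 0 := by
  by_cases hAE : A ⊆ E
  · -- `F ↦ E \ F` identifies the interval `[A, E]` with the subsets of `E \ A`.
    have hcompl : ∑ F ∈ Icc A E, (-1 : ℤ) ^ (E.card - F.card) =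
        ∑ G ∈ (E \ A).powerset, (-1 : ℤ) ^ G.card := by
      refine sum_nbij' (E \ ·) (E \ ·) ?_ ?_ ?_ ?_ ?_
      · intro F hF
        simpa using sdiff_subset_sdiff le_rfl (mem_Icc.1 hF).1
      · intro G hG
        rw [mem_powerset, subset_sdiff] at hG
        exact mem_Icc.2 ⟨subset_sdiff.2 ⟨hAE, hG.2.symm⟩, sdiff_subset⟩
      · intro F hF
        exact sdiff_sdiff_eq_self (mem_Icc.1 hF).2
      · intro G hG
        exact sdiff_sdiff_eq_self ((mem_powerset.1 hG).trans sdiff_subset)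
      · intro F hF
        rw [card_sdiff_of_subset (mem_Icc.1 hF).2]
    rw [hcompl, sum_powerset_neg_one_pow_card]
    refine if_congr ?_ rfl rfl
    rw [sdiff_eq_empty_iff_subset]
    exact ⟨hAE.antisymm, fun h => h ▸ subset_rfl⟩
  · rw [Icc_eq_empty (by simpa using hAE), sum_empty, if_neg (by rintro rfl; exact hAE subset_rfl)]

variable {α : Type} [LinearOrder α]

/-- The position of `a` in `E` listed increasingly (`0` if `a ∉ E`). -/
noncomputable def orderIndex (E : Finset α) (a : α) : Fin (E.card - 1 + 1) :=
  if h : a ∈ E then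
    (E.orderIsoOfFin (Nat.sub_one_add_one (card_ne_zero_of_mem h)).symm).symm ⟨a, h⟩
  else 0

theorem orderIsoOfFin_orderIndex {E : Finset α} (hE : E.card = E.card - 1 + 1) {a : α}
    (h : a ∈ E) : E.orderIsoOfFin hE (E.orderIndex a) = ⟨a, h⟩ := by
  rw [orderIndex, dif_pos h]
  exact OrderIso.apply_symm_apply _ _

theorem orderIndex_comp_surjective [DecidableEq α] {ι : Type} [Fintype ι] [Nonempty ι]
    (x : ι → α) : Function.Surjective ((univ.image x).orderIndex ∘ x) := by
  intro j
  have hE : (univ.image x).card = (univ.image x).card - 1 + 1 :=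
    (Nat.sub_one_add_one (card_pos.2 (univ_nonempty.image x)).ne').symm
  obtain ⟨t, -, ht⟩ := mem_image.1 (univ.image x |>.orderIsoOfFin hE j).2
  refine ⟨t, (univ.image x |>.orderIsoOfFin hE).injective ?_⟩
  rw [Function.comp_apply, orderIsoOfFin_orderIndex hE (mem_image_of_mem x (mem_univ t))]
  exact Subtype.ext ht

end Finset

section EpsilonXi

variable {R : Type} [CommRing R]

def OmegaFunctor.Nat.evalₗ {F G : OmegaFunctor R} {s : ℕ} (v : F.obj s) :
    F.Nat G →ₗ[R] G.obj s :=
  LinearMap.applyₗ v ∘ₗ LinearMap.proj s ∘ₗ (F.Nat G).subtype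

theorem Mfun.nat_ext {X : Type} {px : X} {G : OmegaFunctor R} {U V : (Mfun R X px).Nat G}
    (h : ∀ s (x : Fin (s + 1) → {a : X // a ≠ px}),
      U.1 s (Finsupp.single x 1) = V.1 s (Finsupp.single x 1)) :
    U = V :=
  Subtype.ext <| funext fun s => Finsupp.lhom_ext' fun x => LinearMap.ext_ring (h s x)

/-- `ε([v])_s([x₁ ∧ ⋯ ∧ x_s]) = [v(x₁) ∧ ⋯ ∧ v(x_s)]`, a smash word containing the basepoint
being `0`. -/
def IsEpsilon {X Y : Type} {px : X} {py : Y}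
    (e : (PFunB X Y px py →₀ R) →ₗ[R] (Mfun R X px).Nat (Mfun R Y py)) : Prop :=
  ∀ (v : PFunB X Y px py) (s : ℕ) (x : Fin (s + 1) → {a : X // a ≠ px}),
    (e (Finsupp.single v 1)).1 s (Finsupp.single x 1) =
      if h : ∀ t, v.1 (x t).1 ≠ py then
        Finsupp.single (fun t => (⟨v.1 (x t).1, h t⟩ : {y : Y // y ≠ py})) 1
      else 0

/-- For a surjection `g` this is `(Mfun R S pt).map g _`. -/
noncomputable def Mfun.precomp {S : Type} {pt : S} {s t : ℕ} (g : Fin (t + 1) → Fin (s + 1)) :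
    (Mfun R S pt).obj s →ₗ[R] (Mfun R S pt).obj t :=
  Finsupp.lmapDomain R R (· ∘ g)

variable {X Y : Type} [Fintype X] [DecidableEq X] {px : X} {py : Y}
  [LinearOrder {x : X // x ≠ px}]

theorem phiFun_of_mem {E F : Finset {x : X // x ≠ px}} (hF : F.Nonempty) (hFE : F ⊆ E)
    (y : Fin (E.card - 1 + 1) → {y : Y // y ≠ py}) {a : {x : X // x ≠ px}} (ha : a ∈ F) :
    phiFun X Y px py E F hF hFE y a = (y (E.orderIndex a)).1 := by
  rw [phiFun, dif_pos ⟨a.2, ha⟩, Finset.orderIndex, dif_pos (hFE ha)]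

theorem phiFun_of_notMem {E F : Finset {x : X // x ≠ px}} (hF : F.Nonempty) (hFE : F ⊆ E)
    (y : Fin (E.card - 1 + 1) → {y : Y // y ≠ py}) {a : {x : X // x ≠ px}} (ha : a ∉ F) :
    phiFun X Y px py E F hF hFE y a = py :=
  dif_neg fun ⟨_, h⟩ => ha h

noncomputable def phiPFun {E F : Finset {x : X // x ≠ px}} (hF : F.Nonempty) (hFE : F ⊆ E)
    (y : Fin (E.card - 1 + 1) → {y : Y // y ≠ py}) : PFunB X Y px py :=
  ⟨phiFun X Y px py E F hF hFE y, phiFun_pointed X Y px py E F hF hFE y⟩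

theorem Phi_single {E F : Finset {x : X // x ≠ px}} (hF : F.Nonempty) (hFE : F ⊆ E)
    (y : Fin (E.card - 1 + 1) → {y : Y // y ≠ py}) :
    Phi R X Y px py E F hF hFE (Finsupp.single y 1) = Finsupp.single (phiPFun hF hFE y) 1 := by
  erw [Phi, Finsupp.lift_apply]
  refine (Finsupp.sum_single_index ?_).trans ?_
  · exact zero_smul R _
  · exact one_smul R _

theorem IsEpsilon.evalₗ_comp_Phi
    {e : (PFunB X Y px py →₀ R) →ₗ[R] (Mfun R X px).Nat (Mfun R Y py)} (he : IsEpsilon e)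
    {E F : Finset {x : X // x ≠ px}} (hF : F.Nonempty) (hFE : F ⊆ E) {s : ℕ}
    (x : Fin (s + 1) → {a : X // a ≠ px}) :
    OmegaFunctor.Nat.evalₗ (Finsupp.single x 1 : (Mfun R X px).obj s) ∘ₗ e ∘ₗ
        Phi R X Y px py E F hF hFE =
      if ∀ t, x t ∈ F then Mfun.precomp (E.orderIndex ∘ x) else 0 := by
  by_cases hx : ∀ t, x t ∈ F
  · rw [if_pos hx]
    refine Finsupp.lhom_ext' fun y => LinearMap.ext_ring ?_
    change (e (Phi R X Y px py E F hF hFE (Finsupp.single y 1))).1 s (Finsupp.single x 1) =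
      Finsupp.mapDomain (· ∘ (E.orderIndex ∘ x)) (Finsupp.single y 1)
    have hv : ∀ t, phiFun X Y px py E F hF hFE y (x t) ≠ py := fun t => by
      rw [phiFun_of_mem hF hFE y (hx t)]
      exact (y _).2
    rw [Phi_single, he, Finsupp.mapDomain_single]
    refine (dif_pos hv).trans (congrArg (Finsupp.single · 1) (funext fun t => ?_))
    exact Subtype.ext (phiFun_of_mem hF hFE y (hx t))
  · rw [if_neg hx]
    refine Finsupp.lhom_ext' fun y => LinearMap.ext_ring ?_
    change (e (Phi R X Y px py E F hF hFE (Finsupp.single y 1))).1 s (Finsupp.single x 1) = 0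
    obtain ⟨t, ht⟩ := not_forall.1 hx
    rw [Phi_single, he]
    exact dif_neg fun hv => hv t (phiFun_of_notMem hF hFE y ht)

/-- `T_{⟨|E|⟩}(κ_E)`, pulled back along the positions in `E` of the coordinates of `x`. -/
noncomputable def kappaPullback (T : (Mfun R X px).Nat (Mfun R Y py)) {s : ℕ}
    (x : Fin (s + 1) → {a : X // a ≠ px}) (E : Finset {x : X // x ≠ px}) :
    (Mfun R Y py).obj s :=
  if hE : E.Nonempty then
    Mfun.precomp (E.orderIndex ∘ x) (T.1 (E.card - 1) (kappa R X px E hE))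
  else 0

theorem kappaPullback_image_eq (T : (Mfun R X px).Nat (Mfun R Y py)) {s : ℕ}
    (x : Fin (s + 1) → {a : X // a ≠ px}) :
    kappaPullback T x (Finset.univ.image x) = T.1 s (Finsupp.single x 1) := by
  have hA : (Finset.univ.image x).Nonempty := Finset.univ_nonempty.image x
  have hκ : Mfun.precomp ((Finset.univ.image x).orderIndex ∘ x) (kappa R X px _ hA) =
      Finsupp.single x 1 := by
    change Finsupp.mapDomain _ (Finsupp.single _ 1) = _
    rw [Finsupp.mapDomain_single]
    congr 1
    funext t
    exact congrArg Subtype.val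
      (Finset.orderIsoOfFin_orderIndex _ (Finset.mem_image_of_mem x (Finset.mem_univ t)))
  rw [kappaPullback, dif_pos hA, ← hκ]
  exact LinearMap.congr_fun (T.2 _ (Finset.orderIndex_comp_surjective x)) _

theorem IsEpsilon.evalₗ_xi_summand
    {e : (PFunB X Y px py →₀ R) →ₗ[R] (Mfun R X px).Nat (Mfun R Y py)} (he : IsEpsilon e)
    (T : (Mfun R X px).Nat (Mfun R Y py)) {s : ℕ} (x : Fin (s + 1) → {a : X // a ≠ px})
    (E F : Finset {x : X // x ≠ px}) :
    OmegaFunctor.Nat.evalₗ (Finsupp.single x 1 : (Mfun R X px).obj s)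
        (e (if h : F.Nonempty ∧ F ⊆ E then
          ((-1 : ℤ) ^ (E.card - F.card)) •
            Phi R X Y px py E F h.1 h.2 (T.1 (E.card - 1) (kappa R X px E (h.1.mono h.2)))
        else 0)) =
      (if Finset.univ.image x ⊆ F ∧ F ⊆ E then (-1 : ℤ) ^ (E.card - F.card) else 0) •
        kappaPullback T x E := by
  by_cases h : F.Nonempty ∧ F ⊆ E
  · rw [dif_pos h, map_zsmul, map_zsmul]
    have hPhi := LinearMap.congr_fun (he.evalₗ_comp_Phi h.1 h.2 x)
      (T.1 (E.card - 1) (kappa R X px E (h.1.mono h.2)))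
    rw [LinearMap.comp_apply, LinearMap.comp_apply] at hPhi
    rw [hPhi]
    simp only [Finset.image_subset_iff, Finset.mem_univ, true_implies, h.2, and_true]
    split_ifs with hx
    · rw [kappaPullback, dif_pos (h.1.mono h.2)]
    · rw [LinearMap.zero_apply, smul_zero, zero_smul]
  · rw [dif_neg h, map_zero, map_zero,
      if_neg fun hA => h ⟨(Finset.univ_nonempty.image x).mono hA.1, hA.2⟩, zero_smul]

theorem IsEpsilon.xi_apply_single
    {e : (PFunB X Y px py →₀ R) →ₗ[R] (Mfun R X px).Nat (Mfun R Y py)} (he : IsEpsilon e)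
    (T : (Mfun R X px).Nat (Mfun R Y py)) {s : ℕ} (x : Fin (s + 1) → {a : X // a ≠ px}) :
    (e (xi R X Y px py T)).1 s (Finsupp.single x 1) =
      ∑ E, (∑ F ∈ Finset.Icc (Finset.univ.image x) E, (-1 : ℤ) ^ (E.card - F.card)) •
        kappaPullback T x E := by
  change OmegaFunctor.Nat.evalₗ (Finsupp.single x 1 : (Mfun R X px).obj s)
    (e (xi R X Y px py T)) = _
  simp only [xi, map_sum, he.evalₗ_xi_summand, ← Finset.sum_smul]
  refine Finset.sum_congr rfl fun E _ => congrArg (· • _) ?_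
  rw [← Finset.sum_filter]
  congr 1
  ext F
  simp only [Finset.mem_filter, Finset.mem_univ, true_and, Finset.mem_Icc]

end EpsilonXi

/-- from the proof of Theorem 0.6: `ε ∘ ξ = id` on
`Hom(M(X), M(Y))`; hence `ε` is an isomorphism with inverse `ξ`. -/
theorem epsilon_comp_xi (R : Type) [CommRing R] (X Y : Type)
    [Fintype X] [DecidableEq X] (px : X) (py : Y)
    [LinearOrder {x : X // x ≠ px}]
    (e : ((PFunB X Y px py) →₀ R) →ₗ[R] ((Mfun R X px).Nat (Mfun R Y py)))
    (he : ∀ (v : PFunB X Y px py) (s : ℕ) (x : Fin (s + 1) → {a : X // a ≠ px}),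
      (e (Finsupp.single v 1)).1 s (Finsupp.single x 1) =
        if h : ∀ t, v.1 (x t).1 ≠ py then
          Finsupp.single (fun t => (⟨v.1 (x t).1, h t⟩ : {y : Y // y ≠ py})) 1
        else 0) :
    ∀ T : ((Mfun R X px).Nat (Mfun R Y py)), e (xi R X Y px py T) = T := by
  intro T
  refine Mfun.nat_ext fun s x => ?_
  rw [IsEpsilon.xi_apply_single he]
  simp only [Finset.sum_Icc_neg_one_pow_card_sub, ite_smul, one_smul, zero_smul,
    Finset.sum_ite_eq, Finset.mem_univ, if_true]
  exact kappaPullback_image_eq T x
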